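/- arXiv:2503.02557 — 3 statements merged into one kernel-verified Lean document; each statement's English description precedes it below -/
import Mathlib

section
/- The channel invariants are preserved by a node execution step: if before the step the input channel ρ = xₙ_[tₙ] ∘ ... ∘ x₁_[t₁] satisfies t₁ ≤ t₂ ≤ ... ≤ tₙ ≤ t_ρ (validity time), the output channel σ satisfies its invariants with validity time t_σ ≥ t + p, and the node with period p and activation time t fires (consuming x₁ with t₁ ≤ t and appending a value with time-tag t + p to σ, updating σ's validity time to t + 2p and the node's activation time to t + p), then after the step both channels again satisfy the invariants: all element time-tags are ≤ the channel's validity time and elements are ordered by time-tags. -/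
/-- A MIMOS channel: a finite sequence of time-tagged values (newest leftmost,
oldest rightmost) together with a validity time. -/
structure Channel (α : Type*) where
  elems : List (α × ℕ)   -- (value, time-tag), oldest element is the rightmost
  valid : ℕ              -- validity time of the channel

/-- Channel invariants: every element's time-tag is at most the validity time, and
elements are ordered by time-tags, oldest (smallest tag) rightmost. -/
def ChannelInv {α : Type*} (c : Channel α) : Prop :=
  (∀ e ∈ c.elems, e.2 ≤ c.valid) ∧
  List.Pairwise (· ≥ ·) (c.elems.map Prod.snd)

namespace ChannelInv

variable {α : Type*} {c : Channel α}

theorem of_sublist (hc : ChannelInv c) {l : List (α × ℕ)} (hl : l.Sublist c.elems) :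
    ChannelInv ⟨l, c.valid⟩ :=
  ⟨fun e he => hc.1 e (hl.mem he), hc.2.sublist (hl.map Prod.snd)⟩

theorem cons (hc : ChannelInv c) {x : α} {s valid : ℕ} (hvalid_le : c.valid ≤ s)
    (hs_le : s ≤ valid) : ChannelInv ⟨(x, s) :: c.elems, valid⟩ := by
  refine ⟨?_, List.pairwise_cons.mpr ⟨?_, hc.2⟩⟩
  · intro e he
    rcases List.mem_cons.mp he with rfl | he
    · exact hs_le
    · exact (hc.1 e he).trans (hvalid_le.trans hs_le)
  · simp only [List.mem_map]
    rintro _ ⟨e, he, rfl⟩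
    exact (hc.1 e he).trans hvalid_le

end ChannelInv

theorem exec_step_preserves_invariants_general {α : Type*} (ρ σ : Channel α)
    (p t : ℕ) (v : α)
    (hρ : ChannelInv ρ) (hσ : ChannelInv σ)
    (hσvalid : σ.valid ≤ t + p) :
    ChannelInv ⟨ρ.elems.dropLast, ρ.valid⟩ ∧
    ChannelInv ⟨(v, t + p) :: σ.elems, t + 2 * p⟩ :=
  ⟨hρ.of_sublist (List.dropLast_sublist _), hσ.cons hσvalid (by omega)⟩

/-- the channel invariants are preserved by a node execution step.  If
the input channel `ρ` satisfies the invariants, its oldest element `(x₁, t₁)` has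
`t₁ ≤ t`, the output channel `σ` satisfies the invariants and (maintained invariant)
its validity time is at most `t + p` (the earliest possible tag of the next written
value), then after firing — removing the oldest input element, appending a value
with tag `t + p` to `σ`, and setting `σ`'s validity time to `t + 2p` — both channels
again satisfy the invariants. -/
theorem exec_step_preserves_invariants {α : Type*} (ρ σ : Channel α)
    (p t t₁ : ℕ) (x₁ v : α)
    (hp : 0 < p)
    (hρ : ChannelInv ρ) (hσ : ChannelInv σ)
    (holdest : ρ.elems.getLast? = some (x₁, t₁))
    (ht₁ : t₁ ≤ t)
    (hσvalid : σ.valid ≤ t + p) :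
    ChannelInv ⟨ρ.elems.dropLast, ρ.valid⟩ ∧
    ChannelInv ⟨(v, t + p) :: σ.elems, t + 2 * p⟩ :=
  exec_step_preserves_invariants_general ρ σ p t v hρ hσ hσvalid
end

section
/- Monotonicity of activation times and validity times: along any sequence of rewrite steps of the coordination semantics, the activation time of each node is strictly increasing (by its period p > 0 at each of its steps), and the validity time of each channel is nondecreasing; moreover the time-tags of successive elements appended to any given channel form a strictly increasing sequence (assuming the writing node writes at most one element per step). -/
/-- State of a node (activation time) together with one of its output channels. -/
structure NodeCh (α : Type*) where
  t : ℕ           -- next activation time of the node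
  ch : Channel α  -- an output channel of the node

/-- One rewrite step (firing or idling) of a node with period `p`: the activation
time becomes `t + p`, the output channel's validity time becomes `t + 2p`, and if
the node fires and writes (`w = some v`) one element with tag `t + p` is appended. -/
def nodeStep {α : Type*} (p : ℕ) (w : Option α) (s : NodeCh α) : NodeCh α :=
  ⟨s.t + p,
   ⟨(match w with
     | some v => (v, s.t + p) :: s.ch.elems
     | none => s.ch.elems), s.t + 2 * p⟩⟩

/-! The channel always has validity time `t + p` and only carries tags `≤ t`, where `t` is the
writer's activation time; the next write has tag `t + p > t`, so tags stay strictly ordered. -/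

namespace NodeCh

variable {α : Type*} {p : ℕ} {w : Option α} {s : NodeCh α}

@[simp]
theorem nodeStep_t : (nodeStep p w s).t = s.t + p := rfl

@[simp]
theorem nodeStep_valid : (nodeStep p w s).ch.valid = s.t + 2 * p := rfl

@[simp]
theorem nodeStep_elems_none : (nodeStep p none s).ch.elems = s.ch.elems := rfl

@[simp]
theorem nodeStep_elems_some (v : α) :
    (nodeStep p (some v) s).ch.elems = (v, s.t + p) :: s.ch.elems := rfl

def WellTimed (p : ℕ) (s : NodeCh α) : Prop :=
  s.ch.valid = s.t + p ∧ (∀ e ∈ s.ch.elems, e.2 ≤ s.t) ∧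
    (s.ch.elems.map Prod.snd).Pairwise (· > ·)

theorem wellTimed_init (t₀ : ℕ) : WellTimed p (⟨t₀, ⟨[], t₀ + p⟩⟩ : NodeCh α) := by
  simp [WellTimed]

theorem WellTimed.nodeStep (hp : 0 < p) (h : WellTimed p s) :
    WellTimed p (nodeStep p w s) := by
  obtain ⟨-, hle, hsorted⟩ := h
  refine ⟨by simp only [nodeStep_valid, nodeStep_t]; ring, ?_⟩
  cases w with
  | none => exact ⟨fun e he => (hle e he).trans (Nat.le_add_right _ _), hsorted⟩
  | some v =>
    simp only [nodeStep_elems_some, nodeStep_t, List.forall_mem_cons, List.map_cons,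
      List.pairwise_cons, List.forall_mem_map]
    exact ⟨⟨le_rfl, fun e he => (hle e he).trans (Nat.le_add_right _ _)⟩,
      fun e he => (hle e he).trans_lt (Nat.lt_add_of_pos_right hp), hsorted⟩

end NodeCh

/-- monotonicity of activation times and validity times.  Along any
sequence of rewrite steps starting from a correctly initialized configuration
(empty channel with validity time equal to the first writing time `t₀ + p` of the
writer), the activation time of the node is strictly increasing (by its period
`p > 0` at each step), the validity time of the channel is nondecreasing, and the
time-tags of the successive elements appended to the channel are strictly
increasing (the tag list, newest first, is strictly decreasing left-to-right). -/
theorem monotonicity {α : Type*} (p : ℕ) (hp : 0 < p) (t₀ : ℕ)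
    (w : ℕ → Option α)            -- what the node writes (if anything) at step n
    (s : ℕ → NodeCh α)
    (hinit : s 0 = ⟨t₀, ⟨[], t₀ + p⟩⟩)
    (hstep : ∀ n, s (n + 1) = nodeStep p (w n) (s n)) :
    (∀ n, (s (n + 1)).t = (s n).t + p ∧ (s n).t < (s (n + 1)).t) ∧
    (∀ n, (s n).ch.valid ≤ (s (n + 1)).ch.valid) ∧
    (∀ n, List.Pairwise (· > ·) ((s n).ch.elems.map Prod.snd)) := by
  have hinv : ∀ n, (s n).WellTimed p := by
    intro n
    induction n with
    | zero => exact hinit ▸ NodeCh.wellTimed_init t₀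
    | succ n ih => exact hstep n ▸ ih.nodeStep hp
  refine ⟨fun n => ?_, fun n => ?_, fun n => (hinv n).2.2⟩
  · rw [hstep n, NodeCh.nodeStep_t]
    exact ⟨rfl, Nat.lt_add_of_pos_right hp⟩
  · rw [hstep n, NodeCh.nodeStep_valid, (hinv n).1]
    omega
end

section
/- Timed determinism of a two-node pipeline: consider a producer node P with period p and a consumer node C with period q, connected by a channel initialized empty with validity time t₀ + p (t₀ the start time). If P deterministically outputs value f(n) at its n-th firing, then regardless of the interleaving of rewrite steps, the n-th element ever appearing in the channel is f(n) with time-tag t₀ + n·p, and the sequence of values consumed by C (together with the activation times at which they are consumed) is uniquely determined. -/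
/-- Configuration of the producer–consumer pipeline, tracking the full histories. -/
structure PC (α : Type*) where
  nP : ℕ                  -- number of firings of the producer P so far
  tP : ℕ                  -- next activation time of P
  buf : Channel α         -- the connecting channel
  hist : List (α × ℕ)     -- history of all elements ever appended (in order)
  tC : ℕ                  -- next activation time of the consumer C
  cons : List (α × ℕ)     -- values consumed by C with their consumption times

/-- Initial configuration at start time `t₀`: channel empty with validity `t₀ + p`. -/
def PC.init {α : Type*} (t₀ p : ℕ) : PC α :=
  ⟨0, t₀, ⟨[], t₀ + p⟩, [], t₀, []⟩

/-- A move of P (always enabled): the `n`-th firing appends `f n` with tag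
`tP + p` and updates the validity time to `tP + 2p`. -/
def moveP {α : Type*} (p : ℕ) (f : ℕ → α) (c : PC α) : PC α :=
  { c with
    nP := c.nP + 1
    tP := c.tP + p
    buf := ⟨(f c.nP, c.tP + p) :: c.buf.elems, c.tP + 2 * p⟩
    hist := c.hist ++ [(f c.nP, c.tP + p)] }

/-- A move of C: consume the oldest element if its tag is `≤ tC`, otherwise idle;
in either case advance `tC` by `q`. -/
def moveC {α : Type*} (q : ℕ) (c : PC α) : PC α :=
  match c.buf.elems.getLast? with
  | some (a, τ) =>
      if τ ≤ c.tC then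
        { c with
          buf := ⟨c.buf.elems.dropLast, c.buf.valid⟩
          tC := c.tC + q
          cons := c.cons ++ [(a, c.tC)] }
      else { c with tC := c.tC + q }
  | none => { c with tC := c.tC + q }

/-- C is enabled: it can fire, or it can provably idle (empty channel that is still
valid beyond `tC`, or oldest element in the future). -/
def Cenabled {α : Type*} (c : PC α) : Prop :=
  (∃ a τ, c.buf.elems.getLast? = some (a, τ) ∧ τ ≤ c.tC) ∨
  (c.buf.elems = [] ∧ c.tC < c.buf.valid) ∨
  (∃ a τ, c.buf.elems.getLast? = some (a, τ) ∧ c.tC < τ)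

/-- Interleavings: `true` = a step of P, `false` = a step of C. -/
def execPC {α : Type*} (p q : ℕ) (f : ℕ → α) : PC α → List Bool → PC α
  | c, [] => c
  | c, true :: ms => execPC p q f (moveP p f c) ms
  | c, false :: ms => execPC p q f (moveC q c) ms

/-- A valid run: every C step is taken only when C is enabled (P is always enabled). -/
def RunPC {α : Type*} (p q : ℕ) (f : ℕ → α) : PC α → List Bool → Prop
  | _, [] => True
  | c, true :: ms => RunPC p q f (moveP p f c) ms
  | c, false :: ms => Cenabled c ∧ RunPC p q f (moveC q c) ms
/-!
Every reachable configuration is determined by the number `n` of producer firings and the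
consumer state `(tC, consumed list)`: the `k`-th output of P is `(f k, t₀ + (k+1)p)`, and the
channel holds exactly the outputs not yet consumed, in order.  On such a configuration an enabled
consumer step acts on the consumer state alone, through a map that does not depend on `n`: C
consumes iff the tag of the next unconsumed output is `≤ tC`.  (If that output has not been
produced yet, enabledness forces `tC` below the validity time `t₀ + (n+1)p`, which is its tag.)
So after any valid run the consumed list is the `k`-th iterate of one fixed map, `k` being the
number of consumer steps, and these iterates only ever extend the list.
-/

theorem isPrefix_iterate_of_le {β γ : Type*} {g : β → β} {π : β → List γ}
    (hg : ∀ x, π x <+: π (g x)) (x : β) {k₁ k₂ : ℕ} (h : k₁ ≤ k₂) :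
    π (g^[k₁] x) <+: π (g^[k₂] x) :=
  Nat.rel_of_forall_rel_succ_of_le (· <+: ·) (f := fun k => π (g^[k] x))
    (fun n => by simpa only [Function.iterate_succ_apply'] using hg _) h

namespace Pipeline

variable {α : Type*} (p q t₀ : ℕ) (f : ℕ → α)

def output (k : ℕ) : α × ℕ := (f k, t₀ + (k + 1) * p)

/-- The configuration after `n` firings of P with consumer state `x = (tC, consumed list)`. -/
def config (n : ℕ) (x : ℕ × List (α × ℕ)) : PC α :=
  ⟨n, t₀ + n * p,
    ⟨(((List.range n).drop x.2.length).map (output p t₀ f)).reverse, t₀ + (n + 1) * p⟩,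
    (List.range n).map (output p t₀ f), x.1, x.2⟩

def consumerStep (x : ℕ × List (α × ℕ)) : ℕ × List (α × ℕ) :=
  if t₀ + (x.2.length + 1) * p ≤ x.1 then (x.1 + q, x.2 ++ [(f x.2.length, x.1)])
  else (x.1 + q, x.2)

variable {p q t₀ f}

theorem isPrefix_consumerStep (x : ℕ × List (α × ℕ)) : x.2 <+: (consumerStep p q t₀ f x).2 := by
  unfold consumerStep
  split_ifs <;> simp

theorem init_eq_config : PC.init t₀ p = config p t₀ f 0 (t₀, []) := by
  simp [PC.init, config]

theorem moveP_config {n : ℕ} {x : ℕ × List (α × ℕ)} (hx : x.2.length ≤ n) :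
    moveP p f (config p t₀ f n x) = config p t₀ f (n + 1) x := by
  simp [moveP, config, output, List.range_succ, List.drop_append_of_le_length, hx, add_mul,
    two_mul, add_assoc]

theorem getLast?_config_elems (n : ℕ) (x : ℕ × List (α × ℕ)) :
    (config p t₀ f n x).buf.elems.getLast? =
      if x.2.length < n then some (output p t₀ f x.2.length) else none := by
  simp only [config, List.getLast?_reverse, List.head?_map, List.head?_drop]
  split_ifs with h
  · simp [List.getElem?_range h]
  · simpa using h

theorem lt_valid_of_cenabled_config {n : ℕ} {x : ℕ × List (α × ℕ)}
    (hen : Cenabled (config p t₀ f n x)) (hn : x.2.length = n) : x.1 < t₀ + (x.2.length + 1) * p := by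
  have hempty : (config p t₀ f n x).buf.elems = [] := by simp [config, hn]
  rcases hen with ⟨_, _, h, -⟩ | ⟨-, hlt⟩ | ⟨_, _, h, -⟩
  · simp [hempty] at h
  · rwa [hn]
  · simp [hempty] at h

theorem length_consumerStep_le {n : ℕ} {x : ℕ × List (α × ℕ)} (hx : x.2.length ≤ n)
    (hen : Cenabled (config p t₀ f n x)) : (consumerStep p q t₀ f x).2.length ≤ n := by
  rcases hx.lt_or_eq with hlt | hn
  · unfold consumerStep
    split_ifs <;> simp <;> omega
  · simp [consumerStep, ← hn, (lt_valid_of_cenabled_config hen hn).not_ge]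

theorem moveC_config {n : ℕ} {x : ℕ × List (α × ℕ)} (hx : x.2.length ≤ n)
    (hen : Cenabled (config p t₀ f n x)) :
    moveC q (config p t₀ f n x) = config p t₀ f n (consumerStep p q t₀ f x) := by
  rcases hx.lt_or_eq with hlt | hn
  · rw [moveC, getLast?_config_elems, if_pos hlt]
    by_cases hle : t₀ + (x.2.length + 1) * p ≤ x.1
    · simp [output, consumerStep, hle, config, List.dropLast_reverse]
    · simp [output, consumerStep, hle, config]
  · rw [moveC, getLast?_config_elems, if_neg hn.not_lt]
    simp [consumerStep, config, ← hn, (lt_valid_of_cenabled_config hen hn).not_ge]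

theorem execPC_config : ∀ (ms : List Bool) {n : ℕ} {x : ℕ × List (α × ℕ)}, x.2.length ≤ n →
    RunPC p q f (config p t₀ f n x) ms →
    execPC p q f (config p t₀ f n x) ms =
      config p t₀ f (n + ms.count true) ((consumerStep p q t₀ f)^[ms.count false] x)
  | [], _, _, _, _ => rfl
  | true :: ms, n, x, hx, hrun => by
    rw [RunPC, moveP_config hx] at hrun
    rw [execPC, moveP_config hx, execPC_config ms (hx.trans n.le_succ) hrun, List.count_cons]
    simp [add_assoc, add_comm 1]
  | false :: ms, n, x, hx, ⟨hen, hrun⟩ => by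
    rw [moveC_config hx hen] at hrun
    rw [execPC, moveC_config hx hen, execPC_config ms (length_consumerStep_le hx hen) hrun]
    simp [Function.iterate_succ_apply]

theorem execPC_init {ms : List Bool} (h : RunPC p q f (PC.init t₀ p) ms) :
    execPC p q f (PC.init t₀ p) ms =
      config p t₀ f (ms.count true) ((consumerStep p q t₀ f)^[ms.count false] (t₀, [])) := by
  rw [init_eq_config] at h ⊢
  simpa using execPC_config ms (n := 0) (x := (t₀, [])) le_rfl h

end Pipeline

theorem pipeline_timed_determinism_general {α : Type*} (p q t₀ : ℕ)
    (f : ℕ → α)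
    (ms₁ ms₂ : List Bool)
    (h₁ : RunPC p q f (PC.init t₀ p) ms₁)
    (h₂ : RunPC p q f (PC.init t₀ p) ms₂) :
    (execPC p q f (PC.init t₀ p) ms₁).hist =
      (List.range (execPC p q f (PC.init t₀ p) ms₁).nP).map
        (fun n => (f n, t₀ + (n + 1) * p)) ∧
    ((execPC p q f (PC.init t₀ p) ms₁).cons <+:
       (execPC p q f (PC.init t₀ p) ms₂).cons ∨
     (execPC p q f (PC.init t₀ p) ms₂).cons <+:
       (execPC p q f (PC.init t₀ p) ms₁).cons) := by
  rw [Pipeline.execPC_init h₁, Pipeline.execPC_init h₂]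
  refine ⟨rfl, ?_⟩
  rcases le_total (ms₁.count false) (ms₂.count false) with h | h
  · exact .inl (isPrefix_iterate_of_le Pipeline.isPrefix_consumerStep _ h)
  · exact .inr (isPrefix_iterate_of_le Pipeline.isPrefix_consumerStep _ h)

/-- timed determinism of a two-node pipeline.  For a producer `P` of
period `p > 0` deterministically outputting `f n` at its `n`-th firing and a
consumer `C` of period `q > 0`, starting from the initial configuration at `t₀`:
regardless of the interleaving, the `n`-th element ever appearing in the channel
(0-indexed) is `f n` with time-tag `t₀ + (n+1)·p`, and the consumed history of `C`
(value and consumption-time pairs) is uniquely determined — the consumed histories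
of any two valid runs are comparable (one is a prefix of the other), so runs of
equal progress agree. -/
theorem pipeline_timed_determinism {α : Type*} (p q t₀ : ℕ)
    (hp : 0 < p) (hq : 0 < q) (f : ℕ → α)
    (ms₁ ms₂ : List Bool)
    (h₁ : RunPC p q f (PC.init t₀ p) ms₁)
    (h₂ : RunPC p q f (PC.init t₀ p) ms₂) :
    (execPC p q f (PC.init t₀ p) ms₁).hist =
      (List.range (execPC p q f (PC.init t₀ p) ms₁).nP).map
        (fun n => (f n, t₀ + (n + 1) * p)) ∧
    ((execPC p q f (PC.init t₀ p) ms₁).cons <+: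
       (execPC p q f (PC.init t₀ p) ms₂).cons ∨
     (execPC p q f (PC.init t₀ p) ms₂).cons <+:
       (execPC p q f (PC.init t₀ p) ms₁).cons) :=
  pipeline_timed_determinism_general p q t₀ f ms₁ ms₂ h₁ h₂
end
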